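/- Sample complexity lower bound for (ε,δ)-DP k-ary distribution estimation under total variation distance: There exists a universal constant c > 0 such that for every even integer k ≥ 2, every α with 0 < α < 1/10, every ε > 0, every δ ≥ 0, and every n: if there exists an (ε,δ)-differentially private Markov kernel θ̂ from ([k])^n to Δ_k such that for every p ∈ Δ_k, E_{X∼p^{⊗n}} E_{Q∼θ̂(X)}[d_TV(Q, p)] ≤ α, then n ≥ c·(k/α² + k/(α·(ε+δ))). -/

import Mathlib

open MeasureTheory ProbabilityTheory ENNReal

/-- Hamming distance between two datasets in `𝒳^n`. -/
noncomputable def ham {𝒳 : Type*} {n : ℕ} (x y : Fin n → 𝒳) : ℕ :=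
  letI : DecidableEq 𝒳 := Classical.decEq 𝒳
  (Finset.univ.filter fun i => x i ≠ y i).card

/-- `(ε, δ)`-differential privacy for a kernel from `𝒳^n` to `Θ`. -/
def IsDP {𝒳 Θ : Type*} [MeasurableSpace 𝒳] [MeasurableSpace Θ] {n : ℕ}
    (M : Kernel (Fin n → 𝒳) Θ) (ε δ : ℝ) : Prop :=
  ∀ x y : Fin n → 𝒳, ham x y ≤ 1 → ∀ S : Set Θ, MeasurableSet S →
    M x S ≤ ENNReal.ofReal (Real.exp ε) * M y S + ENNReal.ofReal δ

/-- The simplex `Δ_k` of probability vectors on `[k]`. -/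
def simplex (k : ℕ) : Type := {p : Fin k → ℝ // p ∈ stdSimplex ℝ (Fin k)}

noncomputable instance (k : ℕ) : MeasurableSpace (simplex k) :=
  Subtype.instMeasurableSpace

/-- The probability measure on `Fin k` associated to a probability vector. -/
noncomputable def discMeasure {k : ℕ} (p : Fin k → ℝ) : Measure (Fin k) :=
  ∑ i, ENNReal.ofReal (p i) • Measure.dirac i

/-- `n` i.i.d. samples from the distribution with probability vector `p`. -/
noncomputable def iidSamples {k : ℕ} (n : ℕ) (p : Fin k → ℝ) : Measure (Fin n → Fin k) :=
  Measure.pi fun _ : Fin n => discMeasure p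

/-- Total variation distance between `k`-ary probability vectors:
`(1/2) Σ_x |p(x) − q(x)|`. -/
noncomputable def tvVec {k : ℕ} (p q : Fin k → ℝ) : ℝ := (∑ x, |p x - q x|) / 2

/-- `ℓ₂` distance between `k`-ary probability vectors. -/
noncomputable def l2Vec {k : ℕ} (p q : Fin k → ℝ) : ℝ := Real.sqrt (∑ x, (p x - q x) ^ 2)

/-!
Write `k = 2m` and use Paninski's instances `p_z`, `z ∈ {0,1}^m`, which tilt each pair of atoms
`(i, m + i)` by `±τ/2m` with `τ = 10α`. A TV-accurate estimator must decide most bits of `z`,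
so by Assouad's averaging some bit `i` and two instances `z`, `z'` differing only in `i` are
separated, with advantage `3/5`, by the test "the estimate puts more mass on `i` than on `m + i`".

Statistically this advantage is at most `TV(p_z^n, p_z'^n) ≤ √(1 - BC(p_z, p_z')^(2n))`, and the
Bhattacharyya coefficient is `≥ 1 - τ²/m`, so `n ≳ m/α²`. Privately, the acceptance probability
`s` of the test satisfies `s x - d_H(x, y) (ε + δ) ≤ s y` (group privacy, made additive because
`s ≤ 1`); averaging over the coordinatewise maximal coupling of `p_z^n` and `p_z'^n`, whose
expected Hamming distance is `n τ/m`, gives `n ≳ m/(α(ε + δ))`.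
-/

open Finset

section Sampling

variable {α : Type*}

noncomputable def iidWeight {n : ℕ} (p : α → ℝ) (x : Fin n → α) : ℝ := ∏ j, p (x j)

lemma iidWeight_nonneg {n : ℕ} {p : α → ℝ} (hp : ∀ a, 0 ≤ p a) (x : Fin n → α) :
    0 ≤ iidWeight p x :=
  prod_nonneg fun j _ => hp (x j)

variable [Fintype α]

lemma sum_iidWeight (n : ℕ) (p : α → ℝ) :
    ∑ x : Fin n → α, iidWeight p x = (∑ a, p a) ^ n := by
  simp [iidWeight, ← Fintype.prod_sum]

end Sampling

instance {k : ℕ} (p : Fin k → ℝ) : IsFiniteMeasure (discMeasure p) :=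
  ⟨by simp [discMeasure, Measure.finsetSum_apply, ENNReal.sum_lt_top]⟩

lemma discMeasure_singleton {k : ℕ} (p : Fin k → ℝ) (a : Fin k) :
    discMeasure p {a} = ENNReal.ofReal (p a) := by
  simp [discMeasure, Measure.finsetSum_apply, Set.indicator_apply]

lemma lintegral_iidSamples {k n : ℕ} {p : Fin k → ℝ} (hp : ∀ a, 0 ≤ p a)
    {g : (Fin n → Fin k) → ℝ} (hg : ∀ x, 0 ≤ g x) :
    ∫⁻ x, ENNReal.ofReal (g x) ∂iidSamples n p = ENNReal.ofReal (∑ x, iidWeight p x * g x) := by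
  have hsingleton (x : Fin n → Fin k) : iidSamples n p {x} = ENNReal.ofReal (iidWeight p x) := by
    rw [iidSamples, ← Set.univ_pi_singleton x, Measure.pi_pi, iidWeight,
      ENNReal.ofReal_prod_of_nonneg fun j _ => hp (x j)]
    simp only [discMeasure_singleton]
  rw [lintegral_fintype, ENNReal.ofReal_sum_of_nonneg fun x _ =>
    mul_nonneg (iidWeight_nonneg hp x) (hg x)]
  simp only [hsingleton, ENNReal.ofReal_mul (iidWeight_nonneg hp _),
    mul_comm (ENNReal.ofReal (g _))]

section Privacy

variable {𝒳 : Type*} {n : ℕ}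

lemma ham_eq_hammingDist [DecidableEq 𝒳] (x y : Fin n → 𝒳) : ham x y = hammingDist x y := by
  unfold ham hammingDist
  congr

lemma exists_hammingDist_le_one_and_add_one [DecidableEq 𝒳] {x y : Fin n → 𝒳} (hxy : x ≠ y) :
    ∃ z, hammingDist x z ≤ 1 ∧ hammingDist z y + 1 = hammingDist x y := by
  obtain ⟨i, hi⟩ := Function.ne_iff.1 hxy
  refine ⟨Function.update x i (y i), ?_, ?_⟩
  · refine (card_le_card fun j hj => ?_).trans (card_singleton i).le
    by_contra hji
    simp [Function.update_of_ne (notMem_singleton.1 hji)] at hj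
  · have : ({j | Function.update x i (y i) j ≠ y j} : Finset (Fin n)) =
        ({j | x j ≠ y j} : Finset (Fin n)).erase i := by
      ext j
      rcases eq_or_ne j i with rfl | hji <;> simp [*]
    rw [hammingDist, hammingDist, this, card_erase_add_one (by simpa)]

lemma sub_le_exp_neg_mul {x y : ℝ} (hx : x ≤ 1) (hy : 0 ≤ y) : x - y ≤ Real.exp (-y) * x := by
  rcases le_total 0 x with h0 | h0
  · nlinarith [Real.add_one_le_exp (-y)]
  · nlinarith [Real.exp_le_one_iff.2 (neg_nonpos.2 hy), Real.exp_pos (-y)]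

variable {Θ : Type*} [MeasurableSpace 𝒳] [MeasurableSpace Θ] {M : Kernel (Fin n → 𝒳) Θ}
  [IsMarkovKernel M] {ε δ : ℝ} {S : Set Θ}

/-- As probabilities are at most `1`, the factor `e^ε` costs at most an additive `ε`. -/
lemma IsDP.measureReal_sub_le (hM : IsDP M ε δ) (hε : 0 ≤ ε) (hδ : 0 ≤ δ) {x y : Fin n → 𝒳}
    (hxy : ham x y ≤ 1) (hS : MeasurableSet S) : (M x).real S - (ε + δ) ≤ (M y).real S := by
  have h := ENNReal.toReal_mono (by finiteness) (hM x y hxy S hS)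
  rw [ENNReal.toReal_add (by finiteness) (by finiteness), ENNReal.toReal_mul,
    ENNReal.toReal_ofReal (Real.exp_nonneg ε), ENNReal.toReal_ofReal hδ] at h
  have hexp : Real.exp (-ε) * ((M x).real S - δ) ≤ (M y).real S := by
    rw [Real.exp_neg, inv_mul_le_iff₀ (Real.exp_pos ε)]
    simpa [measureReal_def] using h
  have hle : (M x).real S - δ ≤ 1 := by linarith [measureReal_le_one (μ := M x) (s := S)]
  linarith [sub_le_exp_neg_mul hle hε]

lemma IsDP.measureReal_sub_le_of_hammingDist [DecidableEq 𝒳] (hM : IsDP M ε δ) (hε : 0 ≤ ε)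
    (hδ : 0 ≤ δ) (hS : MeasurableSet S) (x y : Fin n → 𝒳) :
    (M x).real S - hammingDist x y * (ε + δ) ≤ (M y).real S := by
  induction hd : hammingDist x y generalizing x with
  | zero => simp [hammingDist_eq_zero.1 hd]
  | succ d ih =>
    obtain ⟨z, hxz, hzy⟩ := exists_hammingDist_le_one_and_add_one (x := x) (y := y)
      (hammingDist_ne_zero.1 (by omega))
    have hstep := hM.measureReal_sub_le hε hδ (by rwa [ham_eq_hammingDist]) hS
    have := ih z (by omega)
    push_cast
    linarith

end Privacy

section TwoPoint

variable {X : Type*} [Fintype X]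

noncomputable def bhattacharyya (u v : X → ℝ) : ℝ := ∑ x, √(u x * v x)

lemma sum_sub_mul_le_half_sum_abs_sub {u v t : X → ℝ} (huv : ∑ x, u x = ∑ x, v x)
    (ht0 : ∀ x, 0 ≤ t x) (ht1 : ∀ x, t x ≤ 1) :
    ∑ x, (u x - v x) * t x ≤ (∑ x, |u x - v x|) / 2 := by
  have hpt (x : X) : (u x - v x) * t x ≤ (|u x - v x| + (u x - v x)) / 2 := by
    rcases abs_cases (u x - v x) with ⟨h, hs⟩ | ⟨h, hs⟩ <;> rw [h] <;> nlinarith [ht0 x, ht1 x]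
  have hzero : ∑ x, (u x - v x) = 0 := by rw [sum_sub_distrib, huv, sub_self]
  calc _ ≤ ∑ x, (|u x - v x| + (u x - v x)) / 2 := sum_le_sum fun x _ => hpt x
    _ = _ := by rw [← sum_div, sum_add_distrib, hzero, add_zero]

/-- The Hellinger bound: write `|u - v| = |√u - √v| (√u + √v)` and apply Cauchy–Schwarz. -/
lemma sq_sum_abs_sub_le {u v : X → ℝ} (hu : ∀ x, 0 ≤ u x) (hv : ∀ x, 0 ≤ v x)
    (hsu : ∑ x, u x = 1) (hsv : ∑ x, v x = 1) :
    (∑ x, |u x - v x|) ^ 2 ≤ 4 * (1 - bhattacharyya u v ^ 2) := by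
  set B := bhattacharyya u v
  have hB : B = ∑ x, √(u x) * √(v x) := sum_congr rfl fun x _ => Real.sqrt_mul (hu x) _
  have hu' (x : X) : √(u x) ^ 2 = u x := Real.sq_sqrt (hu x)
  have hv' (x : X) : √(v x) ^ 2 = v x := Real.sq_sqrt (hv x)
  have hfactor (x : X) : |u x - v x| = |√(u x) - √(v x)| * (√(u x) + √(v x)) := by
    rw [← abs_of_nonneg (by positivity : 0 ≤ √(u x) + √(v x)), ← abs_mul]
    congr 1
    nlinarith [hu' x, hv' x]
  have hminus : ∑ x, |√(u x) - √(v x)| ^ 2 = 2 - 2 * B := by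
    simp only [sq_abs, sub_sq, hu', hv', sum_add_distrib, sum_sub_distrib, hsu, hsv, hB,
      mul_assoc, ← mul_sum]
    ring
  have hplus : ∑ x, (√(u x) + √(v x)) ^ 2 = 2 + 2 * B := by
    simp only [add_sq, hu', hv', sum_add_distrib, hsu, hsv, hB, mul_assoc, ← mul_sum]
    ring
  calc (∑ x, |u x - v x|) ^ 2
      = (∑ x, |√(u x) - √(v x)| * (√(u x) + √(v x))) ^ 2 := by simp only [hfactor]
    _ ≤ (∑ x, |√(u x) - √(v x)| ^ 2) * ∑ x, (√(u x) + √(v x)) ^ 2 :=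
      sum_mul_sq_le_sq_mul_sq _ _ _
    _ = 4 * (1 - B ^ 2) := by rw [hminus, hplus]; ring

end TwoPoint

section Testing

variable {α : Type*} [Fintype α] {n : ℕ} {u v : α → ℝ}

lemma bhattacharyya_iidWeight (hu : ∀ a, 0 ≤ u a) (hv : ∀ a, 0 ≤ v a) :
    bhattacharyya (iidWeight (n := n) u) (iidWeight v) = bhattacharyya u v ^ n := by
  rw [bhattacharyya, bhattacharyya, ← sum_iidWeight]
  refine sum_congr rfl fun x _ => ?_
  rw [iidWeight, iidWeight, iidWeight, ← prod_mul_distrib,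
    Real.sqrt_prod _ fun j _ => mul_nonneg (hu _) (hv _)]

/-- Le Cam's two-point bound combined with the tensorisation of the Bhattacharyya coefficient. -/
theorem sq_le_two_mul_of_le_sum_sub_mul (hu : ∀ a, 0 ≤ u a) (hv : ∀ a, 0 ≤ v a)
    (hsu : ∑ a, u a = 1) (hsv : ∑ a, v a = 1) {h : ℝ} (hh : 1 - h ≤ bhattacharyya u v)
    (h1 : h ≤ 1) {t : (Fin n → α) → ℝ} (ht0 : ∀ x, 0 ≤ t x) (ht1 : ∀ x, t x ≤ 1) {g : ℝ}
    (hg0 : 0 ≤ g) (hg : g ≤ ∑ x, (iidWeight u x - iidWeight v x) * t x) :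
    g ^ 2 ≤ 2 * n * h := by
  have hP : ∑ x : Fin n → α, iidWeight u x = 1 := by rw [sum_iidWeight, hsu, one_pow]
  have hQ : ∑ x : Fin n → α, iidWeight v x = 1 := by rw [sum_iidWeight, hsv, one_pow]
  have htv := sum_sub_mul_le_half_sum_abs_sub (hP.trans hQ.symm) ht0 ht1
  have hhel := sq_sum_abs_sub_le (iidWeight_nonneg hu) (iidWeight_nonneg hv) hP hQ
  rw [bhattacharyya_iidWeight hu hv] at hhel
  have hbern : 1 - n * h ≤ bhattacharyya u v ^ n :=
    calc 1 - n * h ≤ (1 - h) ^ n := by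
          simpa [sub_eq_add_neg] using one_add_mul_le_pow (a := -h) (by linarith) n
      _ ≤ bhattacharyya u v ^ n := pow_le_pow_left₀ (by linarith) hh n
  have hsq : g ^ 2 ≤ 1 - (bhattacharyya u v ^ n) ^ 2 := by nlinarith
  rcases le_total (n * h) 1 with hnh | hnh <;> nlinarith

end Testing

section Coupling

variable {α : Type*} [Fintype α]

/-- The maximal coupling of `p` and `q`: it keeps the common mass `min p q` on the diagonal and
moves the excess of `p` over `q` proportionally onto the excess of `q` over `p`. -/
noncomputable def maxCoupling [DecidableEq α] (p q : α → ℝ) (a b : α) : ℝ :=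
  (if a = b then min (p a) (q a) else 0)
    + max (p a - q a) 0 * max (q b - p b) 0 / ∑ c, max (p c - q c) 0

variable {p q : α → ℝ}

lemma sum_max_sub_comm (hpq : ∑ a, p a = ∑ a, q a) :
    ∑ c, max (q c - p c) 0 = ∑ c, max (p c - q c) 0 := by
  have hpt (c : α) : max (q c - p c) 0 = max (p c - q c) 0 + (q c - p c) := by
    rcases le_total (p c) (q c) with h | h
    · rw [max_eq_left (by linarith), max_eq_right (by linarith)]; ring
    · rw [max_eq_right (by linarith), max_eq_left (by linarith)]; ring
  simp only [hpt, sum_add_distrib, sum_sub_distrib, hpq, sub_self, add_zero]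

variable [DecidableEq α]

lemma maxCoupling_nonneg (hp : ∀ a, 0 ≤ p a) (hq : ∀ a, 0 ≤ q a) (a b : α) :
    0 ≤ maxCoupling p q a b := by
  unfold maxCoupling
  have : 0 ≤ if a = b then min (p a) (q a) else 0 := by
    split_ifs
    exacts [le_min (hp a) (hq a), le_rfl]
  positivity

lemma sum_maxCoupling_right (hpq : ∑ a, p a = ∑ a, q a) (hT : 0 < ∑ c, max (p c - q c) 0)
    (a : α) : ∑ b, maxCoupling p q a b = p a := by
  simp only [maxCoupling, sum_add_distrib, sum_ite_eq, mem_univ, if_true, ← sum_div, ← mul_sum,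
    sum_max_sub_comm hpq, mul_div_cancel_right₀ _ hT.ne']
  rcases le_total (p a) (q a) with h | h
  · rw [min_eq_left h, max_eq_right (by linarith), add_zero]
  · rw [min_eq_right h, max_eq_left (by linarith)]; ring

lemma sum_maxCoupling_left (hT : 0 < ∑ c, max (p c - q c) 0)
    (b : α) : ∑ a, maxCoupling p q a b = q b := by
  simp only [maxCoupling, sum_add_distrib, sum_ite_eq', mem_univ, if_true, ← sum_div, ← sum_mul,
    mul_div_cancel_left₀ _ hT.ne']
  rcases le_total (p b) (q b) with h | h
  · rw [min_eq_left h, max_eq_left (by linarith)]; ring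
  · rw [min_eq_right h, max_eq_right (by linarith), add_zero]

lemma sum_sum_ite_maxCoupling (hpq : ∑ a, p a = ∑ a, q a) (hT : 0 < ∑ c, max (p c - q c) 0) :
    ∑ a, ∑ b, (if a = b then 0 else maxCoupling p q a b) = ∑ c, max (p c - q c) 0 := by
  have hpt (a b : α) : (if a = b then 0 else maxCoupling p q a b)
      = max (p a - q a) 0 * max (q b - p b) 0 / ∑ c, max (p c - q c) 0 := by
    rcases eq_or_ne a b with rfl | hab
    · rcases le_total (p a) (q a) with h | h <;> simp [max_eq_right (sub_nonpos.2 h)]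
    · simp [maxCoupling, hab]
  simp only [hpt, ← sum_div, ← mul_sum, sum_max_sub_comm hpq,
    mul_div_cancel_right₀ _ hT.ne']

end Coupling

section ProductCoupling

variable {α : Type*} [Fintype α] {n : ℕ}

lemma sum_sum_prod_eq_prod_sum_sum (G : Fin n → α → α → ℝ) :
    ∑ x : Fin n → α, ∑ y : Fin n → α, ∏ j, G j (x j) (y j) = ∏ j, ∑ a, ∑ b, G j a b := by
  simp only [← Fintype.prod_sum]
  exact (Fintype.prod_sum fun j a => ∑ b, G j a b).symm

lemma sum_prod_eq_iidWeight_right (c : α → α → ℝ) (x : Fin n → α) :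
    ∑ y : Fin n → α, ∏ j, c (x j) (y j) = iidWeight (fun a => ∑ b, c a b) x :=
  (Fintype.prod_sum fun j b => c (x j) b).symm

lemma sum_prod_eq_iidWeight_left (c : α → α → ℝ) (y : Fin n → α) :
    ∑ x : Fin n → α, ∏ j, c (x j) (y j) = iidWeight (fun b => ∑ a, c a b) y :=
  (Fintype.prod_sum fun j a => c a (y j)).symm

lemma sum_sum_prod_mul_hammingDist [DecidableEq α] (c : α → α → ℝ) (hc : ∑ a, ∑ b, c a b = 1) :
    ∑ x : Fin n → α, ∑ y : Fin n → α, (∏ j, c (x j) (y j)) * hammingDist x y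
      = n * ∑ a, ∑ b, (if a = b then 0 else c a b) := by
  set e : α → α → ℝ := fun a b => if a = b then 0 else 1
  have hham (x y : Fin n → α) : (hammingDist x y : ℝ) = ∑ j, e (x j) (y j) := by
    simp [e, hammingDist, card_filter]
  have hprod (j : Fin n) (x y : Fin n → α) : (∏ i, c (x i) (y i)) * e (x j) (y j)
      = ∏ i, c (x i) (y i) * (if i = j then e (x i) (y i) else 1) := by
    rw [prod_mul_distrib, prod_ite_eq']
    simp
  have hfactor (j i : Fin n) : ∑ a, ∑ b, c a b * (if i = j then e a b else 1)
      = if i = j then ∑ a, ∑ b, (if a = b then 0 else c a b) else 1 := by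
    split_ifs
    · simp [e]
    · simp [hc]
  calc ∑ x : Fin n → α, ∑ y : Fin n → α, (∏ j, c (x j) (y j)) * hammingDist x y
      = ∑ x : Fin n → α, ∑ y : Fin n → α, ∑ j,
          ∏ i, c (x i) (y i) * (if i = j then e (x i) (y i) else 1) := by
        simp only [hham, mul_sum, hprod]
    _ = ∑ j, ∑ x : Fin n → α, ∑ y : Fin n → α,
          ∏ i, c (x i) (y i) * (if i = j then e (x i) (y i) else 1) := sum_comm_cycle
    _ = ∑ j : Fin n, ∏ i, (if i = j then ∑ a, ∑ b, (if a = b then 0 else c a b) else 1) :=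
        sum_congr rfl fun j _ => by
          rw [sum_sum_prod_eq_prod_sum_sum fun i a b => c a b * (if i = j then e a b else 1)]
          exact prod_congr rfl fun i _ => hfactor j i
    _ = n * ∑ a, ∑ b, (if a = b then 0 else c a b) := by simp

end ProductCoupling

section PrivateTesting

variable {α Θ : Type*} [Fintype α] [DecidableEq α] [MeasurableSpace α] [MeasurableSpace Θ]
  {n : ℕ}

/-- Couple the two sample distributions coordinatewise by `maxCoupling`; additive group privacy
then costs `ε + δ` per coordinate on which the coupled samples differ. -/
theorem IsDP.le_mul_of_le_sum_sub_mul {M : Kernel (Fin n → α) Θ} [IsMarkovKernel M] {ε δ : ℝ}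
    (hM : IsDP M ε δ) (hε : 0 ≤ ε) (hδ : 0 ≤ δ) {u v : α → ℝ} (hu : ∀ a, 0 ≤ u a)
    (hv : ∀ a, 0 ≤ v a) (hsu : ∑ a, u a = 1) (hsv : ∑ a, v a = 1)
    (hT : 0 < ∑ a, max (u a - v a) 0) {S : Set Θ} (hS : MeasurableSet S) {g : ℝ}
    (hg : g ≤ ∑ x, (iidWeight u x - iidWeight v x) * (M x).real S) :
    g ≤ n * (∑ a, max (u a - v a) 0) * (ε + δ) := by
  set Ω : (Fin n → α) → (Fin n → α) → ℝ := fun x y => ∏ j, maxCoupling u v (x j) (y j)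
  have huv : ∑ a, u a = ∑ a, v a := hsu.trans hsv.symm
  have hΩu (x : Fin n → α) : ∑ y, Ω x y = iidWeight u x := by
    simp only [Ω, sum_prod_eq_iidWeight_right, sum_maxCoupling_right huv hT]
  have hΩv (y : Fin n → α) : ∑ x, Ω x y = iidWeight v y := by
    simp only [Ω, sum_prod_eq_iidWeight_left, sum_maxCoupling_left hT]
  have hdist : ∑ x, ∑ y, Ω x y * hammingDist x y = n * ∑ a, max (u a - v a) 0 := by
    rw [sum_sum_prod_mul_hammingDist, sum_sum_ite_maxCoupling huv hT]
    simp [sum_maxCoupling_right huv hT, hsu]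
  have hcoupled : ∑ x, ∑ y, Ω x y * ((M x).real S - hammingDist x y * (ε + δ))
      ≤ ∑ x, ∑ y, Ω x y * (M y).real S :=
    sum_le_sum fun x _ => sum_le_sum fun y _ => mul_le_mul_of_nonneg_left
      (hM.measureReal_sub_le_of_hammingDist hε hδ hS x y)
      (prod_nonneg fun j _ => maxCoupling_nonneg hu hv _ _)
  have hv_side : ∑ x, ∑ y, Ω x y * (M y).real S = ∑ y, iidWeight v y * (M y).real S := by
    rw [sum_comm]
    simp only [← sum_mul, hΩv]
  rw [hv_side] at hcoupled
  simp only [mul_sub, sum_sub_distrib, ← mul_assoc, ← sum_mul, hdist, hΩu] at hcoupled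
  simp only [sub_mul, sum_sub_distrib] at hg
  linarith

end PrivateTesting

section Paninski

variable {m : ℕ} {τ : ℝ}

/-- Paninski's hard instances on `[2m]`: bit `i` of `z` decides which of `i` and `m + i` gets
the mass `(1 + τ) / 2m` and which gets `(1 - τ) / 2m`. -/
noncomputable def paninski (τ : ℝ) (z : Fin m → Bool) : Fin (m + m) → ℝ :=
  Fin.append (fun i => if z i then (1 + τ) / (2 * m) else (1 - τ) / (2 * m))
    (fun i => if z i then (1 - τ) / (2 * m) else (1 + τ) / (2 * m))

lemma paninski_castAdd (z : Fin m → Bool) (i : Fin m) :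
    paninski τ z (Fin.castAdd m i) = if z i then (1 + τ) / (2 * m) else (1 - τ) / (2 * m) :=
  Fin.append_left _ _ i

lemma paninski_natAdd (z : Fin m → Bool) (i : Fin m) :
    paninski τ z (Fin.natAdd m i) = if z i then (1 - τ) / (2 * m) else (1 + τ) / (2 * m) :=
  Fin.append_right _ _ i

lemma paninski_nonneg (hτ : |τ| ≤ 1) (z : Fin m → Bool) (c : Fin (m + m)) :
    0 ≤ paninski τ z c := by
  obtain ⟨hτ₁, hτ₂⟩ := abs_le.1 hτ
  refine Fin.addCases (fun i => ?_) (fun i => ?_) c <;>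
    · first | rw [paninski_castAdd] | rw [paninski_natAdd]
      split_ifs <;> apply div_nonneg <;> linarith [(Nat.cast_nonneg m : (0 : ℝ) ≤ m)]

lemma sum_paninski (hm : m ≠ 0) (z : Fin m → Bool) : ∑ c, paninski τ z c = 1 := by
  have hpair (i : Fin m) :
      paninski τ z (Fin.castAdd m i) + paninski τ z (Fin.natAdd m i) = 1 / m := by
    rw [paninski_castAdd, paninski_natAdd]
    split_ifs <;> field_simp <;> ring
  rw [Fin.sum_univ_add, ← sum_add_distrib]
  simp only [hpair, sum_const, card_univ, Fintype.card_fin, nsmul_eq_mul]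
  field_simp

lemma paninski_mem (hm : m ≠ 0) (hτ : |τ| ≤ 1) (z : Fin m → Bool) :
    paninski τ z ∈ stdSimplex ℝ (Fin (m + m)) :=
  ⟨paninski_nonneg hτ z, sum_paninski hm z⟩

lemma sum_max_sub_paninski_update (hτ : 0 ≤ τ) {z : Fin m → Bool} {i : Fin m}
    (hz : z i = true) :
    ∑ c, max (paninski τ z c - paninski τ (Function.update z i false) c) 0 = τ / m := by
  rw [Fin.sum_univ_add, sum_eq_single i, sum_eq_single i]
  · simp only [paninski_castAdd, paninski_natAdd, hz, Function.update_self, if_true,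
      Bool.false_eq_true, if_false]
    have hgap : (1 + τ) / (2 * m) - (1 - τ) / (2 * m) = τ / m := by ring
    rw [hgap, max_eq_left (by positivity), ← neg_sub, hgap,
      max_eq_right (by simpa using by positivity)]
    ring
  all_goals first
    | intro j _ hj
      simp only [paninski_castAdd, paninski_natAdd, Function.update_of_ne hj, sub_self, max_self]
    | simp

lemma one_sub_le_bhattacharyya_paninski (hτ₀ : 0 ≤ τ) (hτ₁ : τ ≤ 1) (hm : m ≠ 0)
    {z : Fin m → Bool} {i : Fin m} (hz : z i = true) :
    1 - τ ^ 2 / m ≤ bhattacharyya (paninski τ z) (paninski τ (Function.update z i false)) := by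
  set z' := Function.update z i false
  have hτ₂ : τ ^ 2 ≤ 1 := by nlinarith
  have hsqrt : (1 - τ ^ 2) / (2 * m) ≤ √((1 + τ) / (2 * m) * ((1 - τ) / (2 * m))) := by
    rw [Real.le_sqrt (div_nonneg (by linarith) (by positivity)) (by positivity), div_pow,
      div_mul_div_comm, ← sq]
    gcongr
    nlinarith [mul_nonneg (sub_nonneg.2 hτ₂) (sq_nonneg τ)]
  have hterm (j : Fin m) :
      paninski τ z (Fin.castAdd m j) + paninski τ z (Fin.natAdd m j)
          - (if j = i then τ ^ 2 / m else 0)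
        ≤ √(paninski τ z (Fin.castAdd m j) * paninski τ z' (Fin.castAdd m j))
          + √(paninski τ z (Fin.natAdd m j) * paninski τ z' (Fin.natAdd m j)) := by
    rcases eq_or_ne j i with rfl | hj
    · simp only [paninski_castAdd, paninski_natAdd, hz, z', Function.update_self, if_true,
        Bool.false_eq_true, if_false]
      rw [mul_comm ((1 - τ) / _)]
      have : (1 + τ) / (2 * m) + (1 - τ) / (2 * m) - τ ^ 2 / m
          = 2 * ((1 - τ ^ 2) / (2 * m)) := by
        field_simp
        ring
      linarith
    · simp only [z', paninski_castAdd, paninski_natAdd, Function.update_of_ne hj, if_neg hj,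
        sub_zero]
      have hp := paninski_nonneg (by rwa [abs_of_nonneg hτ₀]) z
      rw [← paninski_castAdd, ← paninski_natAdd, Real.sqrt_mul_self (hp _),
        Real.sqrt_mul_self (hp _)]
  calc 1 - τ ^ 2 / m
      = ∑ j, (paninski τ z (Fin.castAdd m j) + paninski τ z (Fin.natAdd m j))
          - ∑ j, (if j = i then τ ^ 2 / m else 0) := by
        rw [sum_add_distrib, ← Fin.sum_univ_add, sum_paninski hm, sum_ite_eq']
        simp
    _ ≤ _ := by
        rw [← sum_sub_distrib, bhattacharyya, Fin.sum_univ_add, ← sum_add_distrib]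
        exact sum_le_sum fun j _ => hterm j

end Paninski

section Decoding

variable {m n : ℕ} {τ : ℝ}

/-- The estimates that guess bit `i` to be `true`. -/
def decodeSet (i : Fin m) : Set (simplex (m + m)) :=
  {q | q.1 (Fin.natAdd m i) ≤ q.1 (Fin.castAdd m i)}

def wrongSet (z : Fin m → Bool) (i : Fin m) : Set (simplex (m + m)) :=
  if z i then (decodeSet i)ᶜ else decodeSet i

lemma measurableSet_decodeSet (i : Fin m) : MeasurableSet (decodeSet i) := by
  have (c : Fin (m + m)) : Measurable fun q : simplex (m + m) => q.1 c :=
    (measurable_pi_apply c).comp measurable_subtype_coe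
  exact measurableSet_le (this _) (this _)

lemma measurableSet_wrongSet (z : Fin m → Bool) (i : Fin m) : MeasurableSet (wrongSet z i) := by
  unfold wrongSet
  split_ifs
  exacts [(measurableSet_decodeSet i).compl, measurableSet_decodeSet i]

lemma mul_sum_indicator_wrongSet_le_tvVec (z : Fin m → Bool) (q : simplex (m + m)) :
    τ / (2 * m) * ∑ i, (wrongSet z i).indicator 1 q ≤ tvVec q.1 (paninski τ z) := by
  have hpair (i : Fin m) : τ / m * (wrongSet z i).indicator 1 q
      ≤ |q.1 (Fin.castAdd m i) - paninski τ z (Fin.castAdd m i)|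
        + |q.1 (Fin.natAdd m i) - paninski τ z (Fin.natAdd m i)| := by
    have hgap : (1 + τ) / (2 * m) - (1 - τ) / (2 * m) = τ / m := by ring
    by_cases hq : q ∈ wrongSet z i
    · rw [Set.indicator_of_mem hq, Pi.one_apply, mul_one, paninski_castAdd, paninski_natAdd]
      cases hz : z i <;>
        simp only [wrongSet, decodeSet, hz, Bool.false_eq_true, if_true, if_false,
          Set.mem_compl_iff, Set.mem_ofPred_eq, not_le] at hq ⊢ <;>
        linarith [le_abs_self (q.1 (Fin.castAdd m i) - (1 - τ) / (2 * m)),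
          neg_abs_le (q.1 (Fin.castAdd m i) - (1 + τ) / (2 * m)),
          le_abs_self (q.1 (Fin.natAdd m i) - (1 - τ) / (2 * m)),
          neg_abs_le (q.1 (Fin.natAdd m i) - (1 + τ) / (2 * m))]
    · rw [Set.indicator_of_notMem hq, mul_zero]
      positivity
  calc τ / (2 * m) * ∑ i, (wrongSet z i).indicator 1 q
      = (∑ i, τ / m * (wrongSet z i).indicator 1 q) / 2 := by rw [← mul_sum]; ring
    _ ≤ (∑ i, (|q.1 (Fin.castAdd m i) - paninski τ z (Fin.castAdd m i)|
          + |q.1 (Fin.natAdd m i) - paninski τ z (Fin.natAdd m i)|)) / 2 := by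
        gcongr with i
        exact hpair i
    _ = tvVec q.1 (paninski τ z) := by rw [tvVec, Fin.sum_univ_add, sum_add_distrib]

noncomputable def decodingError (est : Kernel (Fin n → Fin (m + m)) (simplex (m + m))) (τ : ℝ)
    (z : Fin m → Bool) (i : Fin m) : ℝ :=
  ∑ x, iidWeight (paninski τ z) x * (est x).real (wrongSet z i)

variable {est : Kernel (Fin n → Fin (m + m)) (simplex (m + m))} [IsMarkovKernel est]

lemma mul_sum_decodingError_le (hm : m ≠ 0) (hτ₀ : 0 ≤ τ) (hτ₁ : τ ≤ 1) {α : ℝ} (hα : 0 ≤ α)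
    (z : Fin m → Bool)
    (hacc : ∫⁻ x, ∫⁻ q, ENNReal.ofReal (tvVec q.1 (paninski τ z)) ∂(est x)
      ∂(iidSamples n (paninski τ z)) ≤ ENNReal.ofReal α) :
    τ / (2 * m) * ∑ i, decodingError est τ z i ≤ α := by
  have hp : ∀ c, 0 ≤ paninski τ z c := paninski_nonneg (by rwa [abs_of_nonneg hτ₀]) z
  have hinner (x : Fin n → Fin (m + m)) :
      ENNReal.ofReal (τ / (2 * m) * ∑ i, (est x).real (wrongSet z i))
        ≤ ∫⁻ q, ENNReal.ofReal (tvVec q.1 (paninski τ z)) ∂(est x) := by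
    have hint : Integrable (fun q => τ / (2 * m) * ∑ i, (wrongSet z i).indicator 1 q) (est x) :=
      (integrable_finsetSum _ fun i _ =>
        (integrable_const 1).indicator (measurableSet_wrongSet z i)).const_mul _
    calc ENNReal.ofReal (τ / (2 * m) * ∑ i, (est x).real (wrongSet z i))
        = ∫⁻ q, ENNReal.ofReal (τ / (2 * m) * ∑ i, (wrongSet z i).indicator 1 q) ∂(est x) := by
          rw [← ofReal_integral_eq_lintegral_ofReal hint
            (Filter.Eventually.of_forall fun q => mul_nonneg (by positivity)
              (sum_nonneg fun i _ => Set.indicator_nonneg (fun _ _ => zero_le_one) q)),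
            integral_const_mul,
            integral_finsetSum _ fun i _ =>
              (integrable_const 1).indicator (measurableSet_wrongSet z i)]
          simp only [integral_indicator_one (measurableSet_wrongSet z _)]
      _ ≤ _ := lintegral_mono fun q =>
          ENNReal.ofReal_le_ofReal (mul_sum_indicator_wrongSet_le_tvVec z q)
  have h := (lintegral_mono hinner).trans hacc
  rw [lintegral_iidSamples hp fun x => by positivity, ENNReal.ofReal_le_ofReal_iff hα] at h
  convert h using 1
  simp only [decodingError, mul_sum, sum_comm (s := (univ : Finset (Fin m)))]
  exact sum_congr rfl fun x _ => sum_congr rfl fun i _ => by ring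

lemma one_sub_le_sum_sub_mul_decodeSet (hm : m ≠ 0) {z : Fin m → Bool} {i : Fin m}
    (hz : z i = true) {b : ℝ}
    (hb : decodingError est τ z i + decodingError est τ (Function.update z i false) i ≤ b) :
    1 - b ≤ ∑ x, (iidWeight (paninski τ z) x
      - iidWeight (paninski τ (Function.update z i false)) x) * (est x).real (decodeSet i) := by
  have hP : ∑ x : Fin n → Fin (m + m), iidWeight (paninski τ z) x = 1 := by
    rw [sum_iidWeight, sum_paninski hm, one_pow]
  simp only [decodingError, wrongSet, hz, if_true, Function.update_self, Bool.false_eq_true,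
    if_false, probReal_compl_eq_one_sub (measurableSet_decodeSet i), mul_one_sub, sub_mul,
    sum_sub_distrib, hP] at hb ⊢
  linarith

lemma sq_one_sub_le_of_decodingError_le (hm : m ≠ 0) (hτ₀ : 0 ≤ τ) (hτ₁ : τ ≤ 1)
    {z : Fin m → Bool} {i : Fin m} (hz : z i = true) {b : ℝ} (hb₁ : b ≤ 1)
    (hb : decodingError est τ z i + decodingError est τ (Function.update z i false) i ≤ b) :
    (1 - b) ^ 2 ≤ 2 * n * (τ ^ 2 / m) := by
  have hτ : |τ| ≤ 1 := by rwa [abs_of_nonneg hτ₀]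
  have hm₁ : (1 : ℝ) ≤ m := by exact_mod_cast Nat.one_le_iff_ne_zero.2 hm
  exact sq_le_two_mul_of_le_sum_sub_mul (paninski_nonneg hτ z) (paninski_nonneg hτ _)
    (sum_paninski hm z) (sum_paninski hm _) (one_sub_le_bhattacharyya_paninski hτ₀ hτ₁ hm hz)
    (div_le_one_of_le₀ (by nlinarith) (by positivity)) (fun _ => measureReal_nonneg)
    (fun _ => measureReal_le_one) (by linarith) (one_sub_le_sum_sub_mul_decodeSet hm hz hb)

lemma IsDP.one_sub_le_of_decodingError_le {ε δ : ℝ} (hDP : IsDP est ε δ) (hε : 0 ≤ ε)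
    (hδ : 0 ≤ δ) (hm : m ≠ 0) (hτ₀ : 0 < τ) (hτ₁ : τ ≤ 1) {z : Fin m → Bool} {i : Fin m}
    (hz : z i = true) {b : ℝ}
    (hb : decodingError est τ z i + decodingError est τ (Function.update z i false) i ≤ b) :
    1 - b ≤ n * (τ / m) * (ε + δ) := by
  have hτ : |τ| ≤ 1 := by rwa [abs_of_pos hτ₀]
  have hexcess := sum_max_sub_paninski_update hτ₀.le hz
  rw [← hexcess]
  exact hDP.le_mul_of_le_sum_sub_mul hε hδ (paninski_nonneg hτ z) (paninski_nonneg hτ _)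
    (sum_paninski hm z) (sum_paninski hm _) (by rw [hexcess]; positivity)
    (measurableSet_decodeSet i) (one_sub_le_sum_sub_mul_decodeSet hm hz hb)

end Decoding

section Averaging

variable {ι : Type*} [Fintype ι] [DecidableEq ι]

lemma sum_update_true_add_update_false (h : (ι → Bool) → ℝ) (i : ι) :
    ∑ z, (h (Function.update z i true) + h (Function.update z i false)) = 2 * ∑ z, h z := by
  let flip : Equiv.Perm (ι → Bool) :=
    Function.Involutive.toPerm (fun z => Function.update z i (!z i)) fun z => by simp
  have hpair (z : ι → Bool) : h (Function.update z i true) + h (Function.update z i false)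
      = h z + h (Function.update z i (!z i)) := by
    cases hz : z i
    · simp [(Function.update_eq_self_iff (f := z)).2 hz.symm, add_comm]
    · simp [(Function.update_eq_self_iff (f := z)).2 hz.symm]
  have hflip : ∑ z, h (Function.update z i (!z i)) = ∑ z, h z := Equiv.sum_comp flip h
  rw [sum_congr rfl fun z _ => hpair z, sum_add_distrib, hflip]
  ring

lemma exists_add_update_false_le [Nonempty ι] (f : (ι → Bool) → ι → ℝ) {b : ℝ}
    (hf : ∀ z, ∑ i, f z i ≤ Fintype.card ι * b) :
    ∃ i z, z i = true ∧ f z i + f (Function.update z i false) i ≤ 2 * b := by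
  have htotal : ∑ i, ∑ z, (f (Function.update z i true) i + f (Function.update z i false) i)
      ≤ ∑ _i : ι, ∑ _z : ι → Bool, 2 * b := by
    rw [sum_congr rfl fun i _ => sum_update_true_add_update_false (f · i) i, ← mul_sum, sum_comm]
    calc 2 * ∑ z, ∑ i, f z i ≤ 2 * ∑ _z : ι → Bool, Fintype.card ι * b := by
          gcongr with z
          exact hf z
      _ = _ := by simp only [sum_const, card_univ, nsmul_eq_mul]; ring
  obtain ⟨i, -, hi⟩ := exists_le_of_sum_le univ_nonempty htotal
  obtain ⟨z, -, hz⟩ := exists_le_of_sum_le univ_nonempty hi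
  exact ⟨i, Function.update z i true, by simp, by simpa using hz⟩

end Averaging

/-- Sample complexity lower bound for `(ε,δ)`-DP `k`-ary distribution estimation under total
variation distance: any `(ε,δ)`-DP estimator achieving expected TV error at most `α` on every
`p ∈ Δ_k` requires `n ≥ c (k/α² + k/(α(ε+δ)))` samples. -/
theorem kary_tv_approx_dp_lower_bound :
    ∃ c : ℝ, 0 < c ∧
      ∀ (k : ℕ), 2 ≤ k → Even k → ∀ α : ℝ, 0 < α → α < 1 / 10 →
        ∀ ε : ℝ, 0 < ε → ∀ δ : ℝ, 0 ≤ δ → ∀ n : ℕ,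
        ∀ est : Kernel (Fin n → Fin k) (simplex k), IsMarkovKernel est → IsDP est ε δ →
          (∀ p : simplex k,
            ∫⁻ x, ∫⁻ q, ENNReal.ofReal (tvVec q.1 p.1) ∂(est x) ∂(iidSamples n p.1)
              ≤ ENNReal.ofReal α) →
          c * (k / α ^ 2 + k / (α * (ε + δ))) ≤ n := by
  refine ⟨1 / 2000, by norm_num, ?_⟩
  intro k hk hk_even α hα hα' ε hε δ hδ n est _ hDP hacc
  obtain ⟨m, rfl⟩ := hk_even
  have hm : m ≠ 0 := by omega
  have : Nonempty (Fin m) := ⟨⟨0, by omega⟩⟩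
  have hτ : |10 * α| ≤ 1 := by rw [abs_of_pos (by positivity)]; linarith
  -- With `τ = 10α` a wrongly decoded bit costs `5α/m` in TV, so on average at most `m/5` bits
  -- are wrong.
  have herr (z : Fin m → Bool) :
      ∑ i, decodingError est (10 * α) z i ≤ Fintype.card (Fin m) * (1 / 5) := by
    have := mul_sum_decodingError_le hm (by positivity) (by linarith) hα.le z
      (hacc ⟨paninski (10 * α) z, paninski_mem hm hτ z⟩)
    rw [show 10 * α / (2 * m) = 5 * α / m by ring, div_mul_eq_mul_div,
      div_le_iff₀ (by positivity)] at this
    rw [Fintype.card_fin]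
    nlinarith
  obtain ⟨i, z, hz, hpair⟩ := exists_add_update_false_le _ herr
  have hstat := sq_one_sub_le_of_decodingError_le hm (by positivity) (by linarith) hz
    (by norm_num) hpair
  have hpriv := hDP.one_sub_le_of_decodingError_le hε.le hδ hm (by positivity) (by linarith) hz
    hpair
  have hstat' : (m + m : ℝ) / α ^ 2 ≤ 10000 / 9 * n := by
    rw [div_le_iff₀ (by positivity)]
    field_simp at hstat
    linarith
  have hpriv' : (m + m : ℝ) / (α * (ε + δ)) ≤ 100 / 3 * n := by
    rw [div_le_iff₀ (by positivity)]
    field_simp at hpriv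
    linarith
  push_cast
  linarith
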